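/- Let E be a σ-lattice effect algebra and a, b ∈ E, with question observables q_a, q_b defined by q_a({0}) = a', q_a({1}) = a (and q_a supported on {0,1}). Then q_a ⪯ q_b in the Olson order if and only if a ≤ b in E. Moreover, for every observable x with spectrum contained in [0,1], q_0 ⪯ x ⪯ q_1. -/
import Mathlib


structure EffectAlgebra (E : Type*) where
  add : E → E → Option E
  zero : E
  one : E
  comm : ∀ a b, add a b = add b a
  assoc : ∀ a b c, (add a b).bind (fun d => add d c) = (add b c).bind (fun d => add a d)
  orth : ∀ a : E, ∃! b, add a b = some one
  pos_one : ∀ a b, add a one = some b → a = zero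

namespace EffectAlgebra

variable {E : Type*}

/-- The induced order: `a ≤ b` iff `a + c = b` for some `c`. -/
def le (EA : EffectAlgebra E) (a b : E) : Prop := ∃ c, EA.add a c = some b

/-- The orthosupplement `a'`, the unique element with `a + a' = 1`. -/
noncomputable def orthosupp (EA : EffectAlgebra E) (a : E) : E :=
  Classical.choose (EA.orth a).exists

/-- `s` is the supremum of `S` with respect to the induced order. -/
def IsSup (EA : EffectAlgebra E) (S : Set E) (s : E) : Prop :=
  (∀ x ∈ S, EA.le x s) ∧ ∀ b, (∀ x ∈ S, EA.le x b) → EA.le s b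

/-- `s` is the infimum of `S` with respect to the induced order. -/
def IsInf (EA : EffectAlgebra E) (S : Set E) (s : E) : Prop :=
  (∀ x ∈ S, EA.le s x) ∧ ∀ b, (∀ x ∈ S, EA.le b x) → EA.le b s

/-- Every increasing sequence has a supremum. -/
def MonotoneSigmaComplete (EA : EffectAlgebra E) : Prop :=
  ∀ f : ℕ → E, (∀ n, EA.le (f n) (f (n + 1))) → ∃ s, EA.IsSup (Set.range f) s

/-- A σ-lattice effect algebra: countable suprema and infima exist. -/
def SigmaLattice (EA : EffectAlgebra E) : Prop :=
  (∀ f : ℕ → E, ∃ s, EA.IsSup (Set.range f) s) ∧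
  (∀ f : ℕ → E, ∃ s, EA.IsInf (Set.range f) s)

/-- A complete lattice effect algebra: arbitrary suprema and infima exist. -/
def CompleteEA (EA : EffectAlgebra E) : Prop :=
  (∀ S : Set E, ∃ s, EA.IsSup S s) ∧ (∀ S : Set E, ∃ s, EA.IsInf S s)

/-- A lattice effect algebra: binary suprema and infima exist. -/
def LatticeEA (EA : EffectAlgebra E) : Prop :=
  (∀ a b : E, ∃ s, EA.IsSup {a, b} s) ∧ (∀ a b : E, ∃ s, EA.IsInf {a, b} s)

end EffectAlgebra

/-- Borel subsets of the real line. -/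
abbrev BorelSet := {A : Set ℝ // MeasurableSet A}

def bIio (t : ℝ) : BorelSet := ⟨Set.Iio t, measurableSet_Iio⟩
def bIic (t : ℝ) : BorelSet := ⟨Set.Iic t, measurableSet_Iic⟩

/-- An observable on a (monotone σ-complete) effect algebra: a unital,
additive map on the Borel σ-algebra preserving suprema of increasing sequences. -/
structure Observable {E : Type*} (EA : EffectAlgebra E) where
  toFun : BorelSet → E
  unital : toFun ⟨Set.univ, MeasurableSet.univ⟩ = EA.one
  additive : ∀ A B : BorelSet, Disjoint A.1 B.1 →
    EA.add (toFun A) (toFun B) = some (toFun ⟨A.1 ∪ B.1, A.2.union B.2⟩)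
  sup_cont : ∀ f : ℕ → BorelSet, (∀ n, (f n).1 ⊆ (f (n + 1)).1) →
    EA.IsSup (Set.range fun n => toFun (f n))
      (toFun ⟨⋃ n, (f n).1, MeasurableSet.iUnion (fun n => (f n).2)⟩)

namespace Observable

variable {E : Type*} {EA : EffectAlgebra E}

/-- The Olson (spectral) order on observables. -/
def OlsonLe (x y : Observable EA) : Prop :=
  ∀ t : ℝ, EA.le (y.toFun (bIio t)) (x.toFun (bIio t))

/-- An observable is bounded if `x(C) = 1` for some compact set `C`. -/
def Bounded (x : Observable EA) : Prop :=
  ∃ C : Set ℝ, ∃ hC : IsCompact C, x.toFun ⟨C, hC.measurableSet⟩ = EA.one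

/-- `x` is the question observable `q_a` of the element `a`. -/
def IsQuestion (x : Observable EA) (a : E) : Prop :=
  ∀ t : ℝ, x.toFun (bIio t) =
    if t ≤ 0 then EA.zero else if t ≤ 1 then EA.orthosupp a else EA.one

/-- The spectrum of `x` lies in `[0,1]`. -/
def SpectrumIn01 (x : Observable EA) : Prop :=
  x.toFun ⟨Set.Icc 0 1, measurableSet_Icc⟩ = EA.one

/-- `z` is the infimum of `S` in the Olson order on bounded observables. -/
def IsOlsonInf (S : Set (Observable EA)) (z : Observable EA) : Prop :=
  z.Bounded ∧ (∀ x ∈ S, z.OlsonLe x) ∧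
    ∀ w : Observable EA, w.Bounded → (∀ x ∈ S, w.OlsonLe x) → w.OlsonLe z

/-- `z` is the supremum of `S` in the Olson order on bounded observables. -/
def IsOlsonSup (S : Set (Observable EA)) (z : Observable EA) : Prop :=
  z.Bounded ∧ (∀ x ∈ S, x.OlsonLe z) ∧
    ∀ w : Observable EA, w.Bounded → (∀ x ∈ S, x.OlsonLe w) → z.OlsonLe w

end Observable

/-- A spectral resolution: monotone, with infimum 0, supremum 1, left continuous. -/
def SpectralResolution {E : Type*} (EA : EffectAlgebra E) (F : ℝ → E) : Prop :=
  (∀ t s : ℝ, t < s → EA.le (F t) (F s)) ∧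
  EA.IsInf (Set.range F) EA.zero ∧
  EA.IsSup (Set.range F) EA.one ∧
  ∀ s : ℝ, EA.IsSup (F '' Set.Iio s) (F s)


namespace EffectAlgebra

variable {E : Type*} (EA : EffectAlgebra E)

lemma orthosupp_spec (a : E) : EA.add a (EA.orthosupp a) = some EA.one :=
  Classical.choose_spec (EA.orth a).exists

lemma orthosupp_unique {a b : E} (h : EA.add a b = some EA.one) :
    b = EA.orthosupp a := by
  obtain ⟨c, _, hu⟩ := EA.orth a
  rw [hu b h, hu (EA.orthosupp a) (EA.orthosupp_spec a)]

lemma add_one_zero : EA.add EA.one EA.zero = some EA.one := by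
  have h := EA.orthosupp_spec EA.one
  have h2 : EA.add (EA.orthosupp EA.one) EA.one = some EA.one := by
    rw [EA.comm]; exact h
  have := EA.pos_one _ _ h2
  rwa [this] at h

lemma orthosupp_one : EA.orthosupp EA.one = EA.zero :=
  (EA.orthosupp_unique EA.add_one_zero).symm

lemma orthosupp_zero : EA.orthosupp EA.zero = EA.one := by
  refine (EA.orthosupp_unique ?_).symm
  rw [EA.comm]; exact EA.add_one_zero

lemma orthosupp_add_zero (a : E) :
    EA.add (EA.orthosupp a) EA.zero = some (EA.orthosupp a) := by
  have h := EA.assoc a (EA.orthosupp a) EA.zero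
  rw [EA.orthosupp_spec a] at h
  simp only [Option.bind_some] at h
  rw [EA.add_one_zero] at h
  cases hd : EA.add (EA.orthosupp a) EA.zero with
  | none => rw [hd] at h; simp at h
  | some d =>
    rw [hd] at h
    simp only [Option.bind_some] at h
    exact congrArg some (EA.orthosupp_unique h.symm)

lemma orthosupp_orthosupp (a : E) : EA.orthosupp (EA.orthosupp a) = a := by
  refine (EA.orthosupp_unique ?_).symm
  rw [EA.comm]; exact EA.orthosupp_spec a

lemma add_zero (a : E) : EA.add a EA.zero = some a := by
  have := EA.orthosupp_add_zero (EA.orthosupp a)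
  rwa [EA.orthosupp_orthosupp] at this

lemma le_refl (a : E) : EA.le a a := ⟨EA.zero, EA.add_zero a⟩

lemma zero_le (a : E) : EA.le EA.zero a := ⟨a, by rw [EA.comm]; exact EA.add_zero a⟩

lemma le_one (a : E) : EA.le a EA.one := ⟨EA.orthosupp a, EA.orthosupp_spec a⟩

lemma le_orthosupp_of_le {a b : E} (h : EA.le a b) :
    EA.le (EA.orthosupp b) (EA.orthosupp a) := by
  obtain ⟨c, hc⟩ := h
  have h := EA.assoc a c (EA.orthosupp b)
  rw [hc] at h
  simp only [Option.bind_some] at h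
  rw [EA.orthosupp_spec b] at h
  cases hd : EA.add c (EA.orthosupp b) with
  | none => rw [hd] at h; simp at h
  | some d =>
    rw [hd] at h
    simp only [Option.bind_some] at h
    rw [EA.orthosupp_unique h.symm] at hd
    exact ⟨c, by rw [EA.comm]; exact hd⟩

lemma le_iff_orthosupp (a b : E) :
    EA.le a b ↔ EA.le (EA.orthosupp b) (EA.orthosupp a) := by
  constructor
  · exact EA.le_orthosupp_of_le
  · intro h
    have := EA.le_orthosupp_of_le h
    rwa [EA.orthosupp_orthosupp, EA.orthosupp_orthosupp] at this

end EffectAlgebra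

namespace Observable

variable {E : Type*} {EA : EffectAlgebra E}

lemma mono (x : Observable EA) (A B : BorelSet) (h : A.1 ⊆ B.1) :
    EA.le (x.toFun A) (x.toFun B) := by
  have hadd := x.additive A ⟨B.1 \ A.1, B.2.diff A.2⟩ (Set.disjoint_sdiff_right)
  have hB : (⟨A.1 ∪ (B.1 \ A.1), A.2.union (B.2.diff A.2)⟩ : BorelSet) = B :=
    Subtype.ext (Set.union_diff_cancel h)
  rw [hB] at hadd
  exact ⟨_, hadd⟩

end Observable

/-- for question observables, `q_a ⪯ q_b` iff `a ≤ b`; and every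
observable with spectrum in `[0,1]` lies between `q_0` and `q_1`. -/
theorem stmt9 {E : Type*} (EA : EffectAlgebra E) (hE : EA.SigmaLattice)
    (a b : E) (qa qb : Observable EA)
    (ha : qa.IsQuestion a) (hb : qb.IsQuestion b) :
    (qa.OlsonLe qb ↔ EA.le a b) ∧
    (∀ x : Observable EA, x.SpectrumIn01 →
      ∀ q0 q1 : Observable EA, q0.IsQuestion EA.zero → q1.IsQuestion EA.one →
        q0.OlsonLe x ∧ x.OlsonLe q1) := by
  have key : ∀ (c : E) (qc : Observable EA), qc.IsQuestion c → ∀ t : ℝ,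
      qc.toFun (bIio t) = if t ≤ 0 then EA.zero else if t ≤ 1 then EA.orthosupp c else EA.one :=
    fun c qc h t => h t
  constructor
  · constructor
    · intro h
      have h1 := h 1
      rw [ha 1, hb 1] at h1
      norm_num at h1
      rw [EA.le_iff_orthosupp]
      exact h1
    · intro h t
      rw [ha t, hb t]
      split_ifs with h0 h1
      · exact EA.le_refl _
      · exact (EA.le_iff_orthosupp a b).mp h
      · exact EA.le_refl _
  · intro x hx q0 q1 h0 h1
    constructor
    · intro t
      rw [h0 t]
      split_ifs with ht ht1
      · -- t ≤ 0 : x (Iio t) = 0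
        have hdisj : Disjoint (Set.Iio t) (Set.Icc (0:ℝ) 1) := by
          rw [Set.disjoint_left]
          intro s hs ⟨hs0, _⟩
          exact absurd (lt_of_lt_of_le hs ht) (not_lt.mpr hs0)
        have hadd := x.additive (bIio t) ⟨Set.Icc 0 1, measurableSet_Icc⟩ hdisj
        rw [hx] at hadd
        have := EA.pos_one _ _ hadd
        rw [this]
        exact EA.le_refl _
      · rw [EA.orthosupp_zero]; exact EA.le_one _
      · exact EA.le_one _
    · intro t
      rw [h1 t]
      split_ifs with ht ht1
      · exact EA.zero_le _
      · rw [EA.orthosupp_one]; exact EA.zero_le _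
      · -- t > 1 : need 1 ≤ x (Iio t)
        push_neg at ht ht1
        have hsub : Set.Icc (0:ℝ) 1 ⊆ Set.Iio t := fun s hs => lt_of_le_of_lt hs.2 ht1
        have := x.mono ⟨Set.Icc 0 1, measurableSet_Icc⟩ (bIio t) hsub
        rwa [hx] at this
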